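/- Let ζ = exp(2πi/n) with n ≥ 3, and let k be an integer with k ≢ ±1 (mod n) and gcd(k, n) = 1. Then there is no homeomorphism h : ℂ → ℂ with h(0) = 0 satisfying h(ζ z) = ζᵏ h(z) for all z ∈ ℂ. -/

import Mathlib

open Complex Set

namespace WN

lemma near_one (z : ℂ) (hz : ‖z - 1‖ < 1) : z ∈ slitPlane ∧ z ≠ 0 := by
  have hre : 0 < z.re := by
    have h1 : |z.re - 1| ≤ ‖z - 1‖ := by
      simpa using Complex.abs_re_le_norm (z - 1)
    have := abs_lt.mp (lt_of_le_of_lt h1 hz)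
    linarith [this.1]
  refine ⟨Complex.mem_slitPlane_iff.2 (Or.inl hre), ?_⟩
  intro h; rw [h] at hre; simp at hre

lemma half_not_int (j m : ℤ) : (m : ℝ) ≠ (j : ℝ) + 1/2 := by
  intro h
  have : (2*m : ℝ) = 2*j + 1 := by push_cast; linarith
  have : (2*m : ℤ) = 2*j + 1 := by exact_mod_cast this
  omega

lemma unique_on_Icc {a b : ℝ} {L₁ L₂ : ℝ → ℂ} (h₁ : Continuous L₁) (h₂ : Continuous L₂)
    (hexp : ∀ t ∈ Icc a b, Complex.exp (L₁ t) = Complex.exp (L₂ t)) :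
    ∀ t ∈ Icc a b, L₁ t - L₂ t = L₁ a - L₂ a := by
  rcases le_or_gt a b with hab | hab
  swap
  · intro t ht; rw [Icc_eq_empty (not_le.mpr hab)] at ht; exact absurd ht (notMem_empty t)
  -- integer-valued function
  have key : ∀ t ∈ Icc a b, ∃ m : ℤ, L₁ t - L₂ t = (m : ℂ) * (2 * Real.pi * I) := by
    intro t ht
    obtain ⟨m, hm⟩ := Complex.exp_eq_exp_iff_exists_int.mp (hexp t ht)
    exact ⟨m, by rw [hm]; ring⟩
  set f : ℝ → ℝ := fun t => (L₁ t - L₂ t).im / (2 * Real.pi) with hf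
  have hfc : Continuous f := by
    apply Continuous.div_const
    exact (Complex.continuous_im.comp (h₁.sub h₂))
  have hfint : ∀ t ∈ Icc a b, ∃ m : ℤ, f t = m ∧ L₁ t - L₂ t = (m : ℂ) * (2 * Real.pi * I) := by
    intro t ht
    obtain ⟨m, hm⟩ := key t ht
    refine ⟨m, ?_, hm⟩
    have him : (L₁ t - L₂ t).im = m * (2 * Real.pi) := by
      rw [hm]; simp [Complex.mul_im]
    rw [hf]; simp only [him]
    field_simp
  intro t ht
  obtain ⟨ma, hma, hma'⟩ := hfint a ⟨le_refl a, hab⟩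
  obtain ⟨mt, hmt, hmt'⟩ := hfint t ht
  suffices hmm : ma = mt by rw [hma', hmt', hmm]
  by_contra hne
  -- IVT: f takes a half-integer value
  have hsub : Icc a t ⊆ Icc a b := Icc_subset_Icc le_rfl ht.2
  have hcont : ContinuousOn f (uIcc a t) := hfc.continuousOn
  have hival := intermediate_value_uIcc (a := a) (b := t) hcont
  set v : ℝ := if (ma:ℝ) < mt then (ma:ℝ) + 1/2 else (ma:ℝ) - 1/2 with hv
  have hvmem : v ∈ uIcc (f a) (f t) := by
    rw [hma, hmt]
    have : ((ma:ℝ) < mt) ∨ (mt:ℝ) < ma := by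
      rcases lt_or_gt_of_ne (fun h => hne (by exact_mod_cast h) : (ma:ℝ) ≠ mt) with h | h
      · exact Or.inl h
      · exact Or.inr h
    rcases this with h | h
    · have h1 : (ma:ℝ) + 1 ≤ mt := by exact_mod_cast Int.add_one_le_iff.mpr (by exact_mod_cast h)
      rw [hv, if_pos h]
      rw [Set.mem_uIcc]; left; constructor <;> linarith
    · have h1 : (mt:ℝ) + 1 ≤ ma := by exact_mod_cast Int.add_one_le_iff.mpr (by exact_mod_cast h)
      rw [hv, if_neg (by linarith)]
      rw [Set.mem_uIcc]; right; constructor <;> linarith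
  obtain ⟨u, hu, huv⟩ := hival hvmem
  have huab : u ∈ Icc a b := by
    have : uIcc a t = Icc a t := uIcc_of_le ht.1
    rw [this] at hu
    exact hsub hu
  obtain ⟨mu, hmu, _⟩ := hfint u huab
  rw [hmu] at huv
  rcases (em ((ma:ℝ) < mt)) with h | h
  · rw [hv, if_pos h] at huv; exact half_not_int ma mu huv
  · rw [hv, if_neg h] at huv
    have : (mu:ℝ) = (ma - 1 : ℤ) + 1/2 := by push_cast; linarith
    exact half_not_int (ma - 1) mu this


lemma exists_lift_Icc (γ : ℝ → ℂ) (hγ : Continuous γ) (h0 : ∀ t, γ t ≠ 0) (N : ℕ) :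
    ∃ L : ℝ → ℂ, Continuous L ∧ ∀ t ∈ Icc (-(N:ℝ)) N, Complex.exp (L t) = γ t := by
  set J : Set ℝ := Icc (-(N:ℝ) - 1) ((N:ℝ) + 1) with hJ
  have hN0 : (0:ℝ) ≤ N := Nat.cast_nonneg N
  have hJne : J.Nonempty := nonempty_Icc.mpr (by linarith)
  obtain ⟨ts, htsJ, hts⟩ := isCompact_Icc.exists_isMinOn hJne
    ((continuous_norm.comp hγ).continuousOn)
  set m : ℝ := ‖γ ts‖ with hm
  have hmpos : 0 < m := norm_pos_iff.mpr (h0 ts)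
  have hmle : ∀ x ∈ J, m ≤ ‖γ x‖ := fun x hx => hts hx
  obtain ⟨δ, hδpos, hδ⟩ := Metric.uniformContinuousOn_iff.mp
    (isCompact_Icc.uniformContinuousOn_of_continuous hγ.continuousOn) m hmpos
  set c : ℕ → ℝ := fun j => min (-(N:ℝ) + j * (δ/2)) ((N:ℝ)+1) with hcdef
  have hc0 : c 0 = -(N:ℝ) := by
    simp only [hcdef, Nat.cast_zero, zero_mul, add_zero]
    exact min_eq_left (by linarith)
  have hcmono : ∀ j, c j ≤ c (j+1) := by
    intro j
    apply min_le_min _ le_rfl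
    have : (j:ℝ) ≤ (j+1:ℕ) := by push_cast; linarith
    nlinarith
  have hcstep : ∀ j, c (j+1) ≤ c j + δ/2 := by
    intro j
    have h1 : c (j+1) ≤ min (-(N:ℝ) + j * (δ/2) + δ/2) ((N:ℝ)+1+δ/2) := by
      apply min_le_min _ (by linarith)
      push_cast; linarith
    calc c (j+1) ≤ min (-(N:ℝ) + j * (δ/2) + δ/2) ((N:ℝ)+1+δ/2) := h1
      _ = min (-(N:ℝ) + j * (δ/2)) ((N:ℝ)+1) + δ/2 := by rw [← min_add_add_right]
      _ = c j + δ/2 := rfl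
  have hcJ : ∀ j, c j ∈ J := by
    intro j
    constructor
    · have : -(N:ℝ) ≤ c j := by
        apply le_min _ (by linarith)
        nlinarith [Nat.cast_nonneg (α := ℝ) j]
      linarith
    · exact min_le_right _ _
  have key : ∀ j : ℕ, ∃ L : ℝ → ℂ, Continuous L ∧
      ∀ t ∈ Icc (-(N:ℝ)) (c j), Complex.exp (L t) = γ t := by
    intro j
    induction j with
    | zero =>
      refine ⟨fun _ => Complex.log (γ (-(N:ℝ))), continuous_const, ?_⟩
      intro t ht
      rw [hc0] at ht
      have : t = -(N:ℝ) := le_antisymm ht.2 ht.1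
      rw [this]; exact Complex.exp_log (h0 _)
    | succ j ih =>
      obtain ⟨L, hLc, hL⟩ := ih
      have hNc : -(N:ℝ) ≤ c j := by rw [← hc0]; exact (by
        clear hL
        induction j with
        | zero => exact le_rfl
        | succ i ihi => exact le_trans ihi (hcmono i))
      -- clamp function
      set q : ℝ → ℝ := fun t => max (c j) (min t (c (j+1))) with hq
      have hqc : Continuous q := continuous_const.max (continuous_id.min continuous_const)
      have hqmem : ∀ t, q t ∈ Icc (c j) (c (j+1)) :=
        fun t => ⟨le_max_left _ _, max_le (hcmono j) (min_le_right _ _)⟩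
      have hqJ : ∀ t, q t ∈ J := by
        intro t
        have h1 := hqmem t
        exact ⟨le_trans (hcJ j).1 h1.1, le_trans h1.2 (hcJ (j+1)).2⟩
      have hratio : ∀ t, ‖γ (q t) / γ (c j) - 1‖ < 1 := by
        intro t
        have h1 : dist (γ (q t)) (γ (c j)) < m := by
          apply hδ _ (hqJ t) _ (hcJ j)
          have h2 := hqmem t
          have h3 := hcstep j
          rw [Real.dist_eq, _root_.abs_of_nonneg (by linarith [h2.1])]
          linarith [h2.2]
        have h2 : ‖γ (q t) / γ (c j) - 1‖ = ‖γ (q t) - γ (c j)‖ / ‖γ (c j)‖ := by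
          have h3 : γ (q t) / γ (c j) - 1 = (γ (q t) - γ (c j)) / γ (c j) := by
            field_simp [h0 (c j)]
          rw [h3, norm_div]
        rw [h2, div_lt_one (by exact norm_pos_iff.mpr (h0 _))]
        calc ‖γ (q t) - γ (c j)‖ = dist (γ (q t)) (γ (c j)) := (Complex.dist_eq _ _).symm
          _ < m := h1
          _ ≤ ‖γ (c j)‖ := hmle _ (hcJ j)
      set L' : ℝ → ℂ := fun t => if t ≤ c j then L t
        else L (c j) + Complex.log (γ (q t) / γ (c j)) with hL'
      have hbr2 : Continuous fun t => L (c j) + Complex.log (γ (q t) / γ (c j)) := by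
        apply continuous_const.add
        rw [continuous_iff_continuousAt]
        intro t
        have hinner : ContinuousAt (fun x => γ (q x) / γ (c j)) t :=
          ((hγ.comp hqc).continuousAt).div continuousAt_const (h0 _)
        exact ContinuousAt.comp (g := Complex.log) (f := fun x => γ (q x) / γ (c j)) (x := t)
          (continuousAt_clog (near_one _ (hratio t)).1) hinner
      have hL'c : Continuous L' := by
        apply Continuous.if_le hLc hbr2 continuous_id continuous_const
        intro t ht
        have ht' : t = c j := ht
        have hqcj : q (c j) = c j := by
          show c j ⊔ (c j ⊓ c (j+1)) = c j
          rw [min_eq_left (hcmono j), max_self]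
        rw [ht', hqcj, div_self (h0 _), Complex.log_one, add_zero]
      refine ⟨L', hL'c, ?_⟩
      intro t ht
      simp only [hL']
      by_cases htc : t ≤ c j
      · rw [if_pos htc]; exact hL t ⟨ht.1, htc⟩
      · rw [if_neg htc]
        push_neg at htc
        have hqt : q t = t := by
          show c j ⊔ (t ⊓ c (j+1)) = t
          rw [min_eq_left ht.2, max_eq_right (le_of_lt htc)]
        rw [Complex.exp_add, hL (c j) ⟨hNc, le_rfl⟩, Complex.exp_log (div_ne_zero (h0 _) (h0 _)), hqt]
        field_simp
        exact mul_div_cancel_left₀ (γ t) (h0 (c j))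
  -- choose j large enough
  obtain ⟨j, hj⟩ := exists_nat_ge ((2*(N:ℝ)) / (δ/2))
  obtain ⟨L, hLc, hL⟩ := key j
  refine ⟨L, hLc, ?_⟩
  intro t ht
  apply hL
  refine ⟨ht.1, le_trans ht.2 ?_⟩
  apply le_min _ (by linarith)
  rw [div_le_iff₀ (by linarith)] at hj
  linarith


lemma exists_lift (γ : ℝ → ℂ) (hγ : Continuous γ) (h0 : ∀ t, γ t ≠ 0) :
    ∃ L : ℝ → ℂ, Continuous L ∧ ∀ t, Complex.exp (L t) = γ t := by
  choose LL hLLc hLL using exists_lift_Icc γ hγ h0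
  set M : ℕ → ℝ → ℂ := fun N t => LL N t - LL N 0 + Complex.log (γ 0) with hM
  have hMc : ∀ N : ℕ, Continuous (M N) := fun N => ((hLLc N).sub continuous_const).add continuous_const
  have h0mem : ∀ N : ℕ, (0:ℝ) ∈ Icc (-(N:ℝ)) (N:ℝ) :=
    fun N => ⟨by simp [Nat.cast_nonneg], Nat.cast_nonneg N⟩
  have hMlift : ∀ N : ℕ, ∀ t ∈ Icc (-(N:ℝ)) (N:ℝ), Complex.exp (M N t) = γ t := by
    intro N t ht
    show Complex.exp (LL N t - LL N 0 + Complex.log (γ 0)) = γ t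
    rw [Complex.exp_add, Complex.exp_sub, hLL N t ht, hLL N 0 (h0mem N),
      Complex.exp_log (h0 0), div_mul_cancel₀ _ (h0 0)]
  have hM0 : ∀ N : ℕ, M N 0 = Complex.log (γ 0) := by
    intro N; show LL N 0 - LL N 0 + Complex.log (γ 0) = _; ring
  have hconsist : ∀ N N' : ℕ, N ≤ N' → ∀ t ∈ Icc (-(N:ℝ)) (N:ℝ), M N t = M N' t := by
    intro N N' hNN' t ht
    have hsub : Icc (-(N:ℝ)) (N:ℝ) ⊆ Icc (-(N':ℝ)) (N':ℝ) :=
      Icc_subset_Icc (neg_le_neg (Nat.cast_le.mpr hNN')) (Nat.cast_le.mpr hNN')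
    have hexp : ∀ s ∈ Icc (-(N:ℝ)) (N:ℝ), Complex.exp (M N s) = Complex.exp (M N' s) := by
      intro s hs; rw [hMlift N s hs, hMlift N' s (hsub hs)]
    have h1 := unique_on_Icc (hMc N) (hMc N') hexp t ht
    have h2 := unique_on_Icc (hMc N) (hMc N') hexp 0 (h0mem N)
    have h3 : M N 0 - M N' 0 = 0 := by rw [hM0, hM0]; ring
    have : M N t - M N' t = 0 := by rw [h1, ← h2, h3]
    exact sub_eq_zero.mp this
  have hmemN : ∀ s : ℝ, s ∈ Icc (-((⌈|s|⌉₊ + 1 : ℕ):ℝ)) ((⌈|s|⌉₊ + 1 : ℕ):ℝ) := by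
    intro s
    have h1 : |s| ≤ ((⌈|s|⌉₊ + 1 : ℕ):ℝ) := by
      push_cast; linarith [Nat.le_ceil |s|]
    exact abs_le.mp h1
  refine ⟨fun t => M (⌈|t|⌉₊ + 1) t, ?_, ?_⟩
  · rw [continuous_iff_continuousAt]
    intro t₀
    set N₀ : ℕ := ⌈|t₀|⌉₊ + 2 with hN₀
    have hU : ∀ s ∈ Ioo (-((N₀:ℝ) - 1)) ((N₀:ℝ) - 1), M (⌈|s|⌉₊ + 1) s = M N₀ s := by
      intro s hs
      have habs : |s| < (N₀:ℝ) - 1 := abs_lt.mpr ⟨hs.1, hs.2⟩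
      have hle : ⌈|s|⌉₊ + 1 ≤ N₀ := by
        have h1 : ⌈|s|⌉₊ ≤ N₀ - 1 := by
          apply Nat.ceil_le.mpr
          have : ((N₀ - 1 : ℕ):ℝ) = (N₀:ℝ) - 1 := by
            rw [hN₀]; push_cast; ring
          rw [this]; linarith
        omega
      exact hconsist _ _ hle s (hmemN s)
    have ht₀U : t₀ ∈ Ioo (-((N₀:ℝ) - 1)) ((N₀:ℝ) - 1) := by
      have h1 : |t₀| < (N₀:ℝ) - 1 := by
        rw [hN₀]; push_cast; linarith [Nat.le_ceil |t₀|]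
      exact abs_lt.mp h1
    apply ContinuousAt.congr ((hMc N₀).continuousAt)
    exact Filter.eventuallyEq_of_mem (Ioo_mem_nhds ht₀U.1 ht₀U.2) (fun s hs => (hU s hs).symm)
  · intro t
    exact hMlift _ t (hmemN t)

open Classical in
noncomputable def wind (γ : ℝ → ℂ) : ℂ :=
  if h : Continuous γ ∧ ∀ t, γ t ≠ 0 then
    Classical.choose (exists_lift γ h.1 h.2) 1 - Classical.choose (exists_lift γ h.1 h.2) 0
  else 0

lemma wind_spec {γ L : ℝ → ℂ} (hγ : Continuous γ) (h0 : ∀ t, γ t ≠ 0)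
    (hLc : Continuous L) (hL : ∀ t, Complex.exp (L t) = γ t) : wind γ = L 1 - L 0 := by
  rw [wind, dif_pos (⟨hγ, h0⟩ : Continuous γ ∧ ∀ t, γ t ≠ 0)]
  obtain ⟨hL'c, hL'⟩ := Classical.choose_spec (exists_lift γ hγ h0)
  set L' := Classical.choose (exists_lift γ hγ h0)
  have h1 := unique_on_Icc (a := 0) (b := 1) hL'c hLc
    (fun t _ => by rw [hL' t, hL t]) 1 ⟨zero_le_one, le_rfl⟩
  linear_combination h1

lemma ratio_lt_one {x y : ℂ} (hy : y ≠ 0) (hxy : ‖x - y‖ < ‖y‖) :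
    ‖x / y - 1‖ < 1 := by
  have h3 : x / y - 1 = (x - y) / y := by field_simp
  rw [h3, norm_div, div_lt_one (norm_pos_iff.mpr hy)]
  exact hxy

lemma wind_eq_of_close {f g : ℝ → ℂ} (hfc : Continuous f) (hgc : Continuous g)
    (hf0 : ∀ t, f t ≠ 0) (hg0 : ∀ t, g t ≠ 0)
    (hf1 : f 1 = f 0) (hg1 : g 1 = g 0)
    (hclose : ∀ t, ‖f t - g t‖ < ‖g t‖) :
    wind f = wind g := by
  obtain ⟨Lg, hLgc, hLg⟩ := exists_lift g hgc hg0
  have hratio : ∀ t, ‖f t / g t - 1‖ < 1 :=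
    fun t => ratio_lt_one (hg0 t) (hclose t)
  set l : ℝ → ℂ := fun t => Complex.log (f t / g t) with hldef
  have hlc : Continuous l := by
    rw [continuous_iff_continuousAt]
    intro t
    have hinner : ContinuousAt (fun x => f x / g x) t :=
      hfc.continuousAt.div hgc.continuousAt (hg0 t)
    exact ContinuousAt.comp (g := Complex.log) (f := fun x => f x / g x) (x := t)
      (continuousAt_clog (near_one _ (hratio t)).1) hinner
  have hlift : ∀ t, Complex.exp (Lg t + l t) = f t := by
    intro t
    rw [Complex.exp_add, hLg t, Complex.exp_log (div_ne_zero (hf0 t) (hg0 t)),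
      mul_div_cancel₀ _ (hg0 t)]
  rw [wind_spec (L := fun t => Lg t + l t) hfc hf0 (hLgc.add hlc) hlift, wind_spec hgc hg0 hLgc hLg]
  have hl10 : l 1 = l 0 := by rw [hldef]; simp only; rw [hf1, hg1]
  rw [hl10]; ring

lemma per_int {F : ℝ → ℂ} (hF : ∀ t, F (t + 1) = F t) : ∀ (t : ℝ) (j : ℤ), F (t + j) = F t := by
  intro t j
  induction j using Int.induction_on with
  | zero => simp
  | succ i ih =>
    have h1 : t + ((i : ℤ) + 1 : ℤ) = (t + (i : ℤ)) + 1 := by push_cast; ring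
    rw [h1, hF, ih]
  | pred i ih =>
    have h2 := hF (t + ((-(i:ℤ) - 1 : ℤ) : ℝ))
    have h3 : t + ((-(i:ℤ) - 1 : ℤ) : ℝ) + 1 = t + ((-(i:ℤ) : ℤ) : ℝ) := by push_cast; ring
    rw [h3] at h2
    rw [← h2]
    exact ih

lemma wind_homotopy (H : ℝ → ℝ → ℂ) (hHc : Continuous fun p : ℝ × ℝ => H p.1 p.2)
    (hH0 : ∀ s t, H s t ≠ 0) (hHper : ∀ s t, H s (t + 1) = H s t) :
    wind (H 0) = wind (H 1) := by
  have hcsec : ∀ s, Continuous (H s) := by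
    intro s
    have : Continuous fun t : ℝ => ((s, t) : ℝ × ℝ) := continuous_const.prodMk continuous_id
    exact hHc.comp this
  have key : ∀ s₀ : ℝ, ∀ᶠ s in nhds s₀, wind (H s) = wind (H s₀) := by
    intro s₀
    obtain ⟨ts, hts, htsmin⟩ := isCompact_Icc.exists_isMinOn (nonempty_Icc.mpr zero_le_one)
      ((continuous_norm.comp (hcsec s₀)).continuousOn)
    set m : ℝ := ‖H s₀ ts‖ with hm
    have hmpos : 0 < m := norm_pos_iff.mpr (hH0 s₀ ts)
    have hK : IsCompact (Icc (s₀-1) (s₀+1) ×ˢ Icc (0:ℝ) 1) := isCompact_Icc.prod isCompact_Icc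
    obtain ⟨δ, hδpos, hδ⟩ := Metric.uniformContinuousOn_iff.mp
      (hK.uniformContinuousOn_of_continuous hHc.continuousOn) m hmpos
    have hεpos : 0 < min δ 1 := lt_min hδpos zero_lt_one
    filter_upwards [Metric.ball_mem_nhds s₀ hεpos] with s hs
    have hsmem : s ∈ Icc (s₀-1) (s₀+1) := by
      rw [Metric.mem_ball, Real.dist_eq] at hs
      have := abs_lt.mp (lt_of_lt_of_le hs (min_le_right δ 1))
      constructor <;> linarith [this.1, this.2]
    have hs₀mem : s₀ ∈ Icc (s₀-1) (s₀+1) := ⟨by linarith, by linarith⟩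
    have base : ∀ t ∈ Icc (0:ℝ) 1, ‖H s t - H s₀ t‖ < m := by
      intro t ht
      have h1 := hδ (s, t) ⟨hsmem, ht⟩ (s₀, t) ⟨hs₀mem, ht⟩ ?_
      · rw [Complex.dist_eq] at h1; exact h1
      · rw [Prod.dist_eq]
        simp only [dist_self]
        rw [max_eq_left dist_nonneg]
        rw [Metric.mem_ball] at hs
        exact lt_of_lt_of_le hs (min_le_left δ 1)
    have hcl : ∀ t, ‖H s t - H s₀ t‖ < ‖H s₀ t‖ := by
      intro t
      have hfr : Int.fract t ∈ Icc (0:ℝ) 1 :=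
        ⟨Int.fract_nonneg t, le_of_lt (Int.fract_lt_one t)⟩
      have hteq : t = Int.fract t + (⌊t⌋ : ℤ) := by rw [Int.fract]; ring
      have e1 : H s t = H s (Int.fract t) := by
        conv_lhs => rw [hteq]
        exact per_int (hHper s) (Int.fract t) ⌊t⌋
      have e2 : H s₀ t = H s₀ (Int.fract t) := by
        conv_lhs => rw [hteq]
        exact per_int (hHper s₀) (Int.fract t) ⌊t⌋
      rw [e1, e2]
      exact lt_of_lt_of_le (base _ hfr) (htsmin hfr)
    exact wind_eq_of_close (hcsec s) (hcsec s₀) (hH0 s) (hH0 s₀)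
      (by have := hHper s 0; rwa [zero_add] at this)
      (by have := hHper s₀ 0; rwa [zero_add] at this) hcl
  set S : Set ℝ := {s : ℝ | wind (H s) = wind (H 0)} with hS
  have hSopen : IsOpen S := by
    rw [isOpen_iff_mem_nhds]
    intro s hsS
    filter_upwards [key s] with s' hs'
    rw [hS] at hsS ⊢
    simp only [mem_setOf_eq] at hsS ⊢
    rw [hs', hsS]
  have hScopen : IsOpen Sᶜ := by
    rw [isOpen_iff_mem_nhds]
    intro s hsS
    filter_upwards [key s] with s' hs'
    simp only [mem_compl_iff, hS, mem_setOf_eq] at hsS ⊢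
    rw [hs']
    exact hsS
  have hclopen : IsClopen S := ⟨isOpen_compl_iff.mp hScopen, hSopen⟩
  rcases isClopen_iff.mp hclopen with h | h
  · exfalso
    have : (0:ℝ) ∈ S := by rw [hS]; simp
    rw [h] at this
    exact this
  · have : (1:ℝ) ∈ S := by rw [h]; trivial
    exact (this : wind (H 1) = wind (H 0)).symm


lemma sub_const {L₁ L₂ : ℝ → ℂ} (h₁ : Continuous L₁) (h₂ : Continuous L₂)
    (hexp : ∀ t, Complex.exp (L₁ t) = Complex.exp (L₂ t)) :
    ∀ t, L₁ t - L₂ t = L₁ 0 - L₂ 0 := by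
  intro t
  rcases le_total 0 t with h | h
  · exact unique_on_Icc h₁ h₂ (fun s _ => hexp s) t ⟨h, le_rfl⟩
  · exact (unique_on_Icc (a := t) (b := 0) h₁ h₂ (fun s _ => hexp s) 0 ⟨h, le_rfl⟩).symm

end WN

open Complex

/-- Let `ζ = exp(2πi/n)` with `n ≥ 3`, and let `k` be an integer
with `k ≢ ±1 (mod n)` and `gcd(k, n) = 1`. Then there is no homeomorphism
`h : ℂ → ℂ` with `h 0 = 0` satisfying `h (ζ z) = ζᵏ h z` for all `z`. -/
theorem no_homeo_conjugating_rotations (n : ℕ) (hn : 3 ≤ n) (k : ℤ)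
    (hk1 : ¬ k ≡ 1 [ZMOD (n : ℤ)]) (hkm1 : ¬ k ≡ -1 [ZMOD (n : ℤ)])
    (hgcd : IsCoprime k (n : ℤ))
    (ζ : ℂ) (hζ : ζ = Complex.exp (2 * Real.pi * Complex.I / n)) :
    ¬ ∃ h : ℂ ≃ₜ ℂ, h 0 = 0 ∧ ∀ z : ℂ, h (ζ * z) = ζ ^ k * h z := by
  rintro ⟨h, hh0, hconj⟩
  set c₁ : ℂ := 2 * Real.pi * Complex.I with hc₁
  have hc₁ne : c₁ ≠ 0 := by
    rw [hc₁]
    simp [Real.pi_ne_zero, Complex.I_ne_zero, Complex.ofReal_ne_zero]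
  have hnC : (n:ℂ) ≠ 0 := Nat.cast_ne_zero.mpr (by omega)
  have hnR : (n:ℝ) ≠ 0 := Nat.cast_ne_zero.mpr (by omega)
  have hζ' : ζ = Complex.exp (c₁ / n) := by rw [hζ, hc₁]
  have hexpc₁ : Complex.exp c₁ = 1 := by rw [hc₁]; exact Complex.exp_two_pi_mul_I
  have hζk : ζ ^ k = Complex.exp ((k:ℂ) * (c₁ / n)) := by
    rw [hζ']; exact (Complex.exp_int_mul _ k).symm
  have hne : ∀ z : ℂ, z ≠ 0 → h z ≠ 0 := by
    intro z hz hc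
    exact hz (h.injective (by rw [hc, hh0]))
  have hsymm0 : h.symm 0 = 0 := by
    calc h.symm 0 = h.symm (h 0) := by rw [hh0]
      _ = 0 := h.symm_apply_apply 0
  have hsymmne : ∀ z : ℂ, z ≠ 0 → h.symm z ≠ 0 := by
    intro z hz hc
    exact hz (h.symm.injective (by rw [hc]; exact hsymm0.symm))
  -- the base loop
  set E : ℝ → ℂ := fun t => Complex.exp (c₁ * (t:ℂ)) with hE
  have hEc : Continuous E :=
    Complex.continuous_exp.comp (continuous_const.mul Complex.continuous_ofReal)
  have hEne : ∀ t, E t ≠ 0 := fun t => Complex.exp_ne_zero _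
  have hEper : ∀ t : ℝ, E (t + 1) = E t := by
    intro t
    show Complex.exp (c₁ * ((t+1:ℝ):ℂ)) = Complex.exp (c₁ * (t:ℂ))
    push_cast
    rw [mul_add, mul_one, Complex.exp_add, hexpc₁, mul_one]
  have hErel : ∀ t : ℝ, E (t + 1/n) = ζ * E t := by
    intro t
    show Complex.exp (c₁ * ((t + 1/n:ℝ):ℂ)) = ζ * Complex.exp (c₁ * (t:ℂ))
    rw [hζ', ← Complex.exp_add]
    push_cast
    congr 1
    field_simp
    ring
  set u : ℝ → ℂ := fun t => h (E t) with hu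
  have huc : Continuous u := h.continuous.comp hEc
  have hu0 : ∀ t, u t ≠ 0 := fun t => hne _ (hEne t)
  have huper : ∀ t, u (t + 1) = u t := by
    intro t; show h (E (t+1)) = h (E t); rw [hEper]
  have hurel : ∀ t, u (t + 1/n) = ζ ^ k * u t := by
    intro t; show h (E (t + 1/n)) = ζ ^ k * h (E t); rw [hErel, hconj]
  obtain ⟨L, hLc, hL⟩ := WN.exists_lift u huc hu0
  set A : ℂ := L 1 - L 0 with hA
  have hexpA : Complex.exp A = 1 := by
    rw [hA, Complex.exp_sub, hL, hL]
    rw [show (1:ℝ) = 0 + 1 by ring, huper 0]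
    exact div_self (hu0 0)
  obtain ⟨mA, hmA⟩ := Complex.exp_eq_one_iff.mp hexpA
  rw [← hc₁] at hmA
  -- shift by one
  have hLshift : ∀ t, L (t + 1) = L t + A := by
    have h1 : ∀ t, L (t + 1) - L t = L (0 + 1) - L 0 :=
      WN.sub_const (hLc.comp (continuous_id.add continuous_const)) hLc
        (fun t => by rw [hL, hL, huper])
    intro t
    have h2 := h1 t
    rw [zero_add] at h2
    rw [hA]; linear_combination h2
  -- step by 1/n
  have hstep : ∀ t, L (t + 1/n) - (L t + (k:ℂ) * (c₁/n)) = L (0 + 1/n) - (L 0 + (k:ℂ)*(c₁/n)) :=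
    WN.sub_const (hLc.comp (continuous_id.add continuous_const))
      (hLc.add continuous_const)
      (fun t => by rw [Complex.exp_add, hL, hL, hurel, hζk, mul_comm])
  have hexpP : Complex.exp (L (0 + 1/n) - (L 0 + (k:ℂ)*(c₁/n))) = 1 := by
    rw [Complex.exp_sub, Complex.exp_add, hL, hL, hurel 0, hζk, mul_comm]
    exact div_self (mul_ne_zero (hu0 0) (Complex.exp_ne_zero _))
  obtain ⟨m₀, hm₀⟩ := Complex.exp_eq_one_iff.mp hexpP
  rw [← hc₁] at hm₀
  have hstep' : ∀ t, L (t + 1/n) = L t + ((k:ℂ) * (c₁/n) + (m₀:ℂ) * c₁) := by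
    intro t
    have h3 := hstep t
    rw [hm₀] at h3
    linear_combination h3
  have hiter : ∀ j : ℕ, L ((j:ℝ) * (1/n)) = L 0 + (j:ℂ) * ((k:ℂ)*(c₁/n) + (m₀:ℂ) * c₁) := by
    intro j
    induction j with
    | zero => simp
    | succ i ih =>
      have hr : ((i+1:ℕ):ℝ) * (1/(n:ℝ)) = (i:ℝ)*(1/n) + 1/n := by push_cast; ring
      rw [hr, hstep', ih]
      push_cast
      ring
  have hAval : A = ((k:ℂ) + (n:ℂ) * m₀) * c₁ := by
    have h4 := hiter n
    rw [show ((n:ℕ):ℝ) * (1/(n:ℝ)) = 1 from by field_simp] at h4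
    rw [hA, h4]
    field_simp
    ring
  have hmAk : mA = k + (n:ℤ) * m₀ := by
    have h5 : (mA : ℂ) * c₁ = ((k:ℂ) + (n:ℂ)*m₀) * c₁ := by rw [← hmA, hAval]
    have h6 := mul_right_cancel₀ hc₁ne h5
    exact_mod_cast h6
  -- the inverse-direction loop
  set v : ℝ → ℂ := fun t => h.symm (Complex.exp (L 0 + c₁ * (t:ℂ))) with hv
  have hvc : Continuous v := h.symm.continuous.comp
    (Complex.continuous_exp.comp (continuous_const.add (continuous_const.mul Complex.continuous_ofReal)))
  have hv0 : ∀ t, v t ≠ 0 := fun t => hsymmne _ (Complex.exp_ne_zero _)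
  have hvper : ∀ t, v (t + 1) = v t := by
    intro t
    show h.symm (Complex.exp (L 0 + c₁ * ((t+1:ℝ):ℂ))) = h.symm (Complex.exp (L 0 + c₁ * (t:ℂ)))
    congr 1
    push_cast
    rw [mul_add, mul_one, ← add_assoc, Complex.exp_add, hexpc₁, mul_one]
  obtain ⟨M, hMc, hM⟩ := WN.exists_lift v hvc hv0
  set Bv : ℂ := M 1 - M 0 with hBv
  have hexpBv : Complex.exp Bv = 1 := by
    rw [hBv, Complex.exp_sub, hM, hM]
    rw [show (1:ℝ) = 0 + 1 by ring, hvper 0]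
    exact div_self (hv0 0)
  obtain ⟨mB, hmB⟩ := Complex.exp_eq_one_iff.mp hexpBv
  rw [← hc₁] at hmB
  have hMshift : ∀ t, M (t + 1) = M t + Bv := by
    have h1 : ∀ t, M (t + 1) - M t = M (0 + 1) - M 0 :=
      WN.sub_const (hMc.comp (continuous_id.add continuous_const)) hMc
        (fun t => by rw [hM, hM, hvper])
    intro t
    have h2 := h1 t
    rw [zero_add] at h2
    rw [hBv]; linear_combination h2
  have hMint : ∀ j : ℤ, M ((j:ℝ)) = M 0 + (j:ℂ) * Bv := by
    intro j
    induction j using Int.induction_on with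
    | zero => simp
    | succ i ih =>
      have hr : (((i:ℤ)+1 : ℤ):ℝ) = ((i:ℤ):ℝ) + 1 := by push_cast; ring
      rw [hr, hMshift, ih]; push_cast; ring
    | pred i ih =>
      have h6 := hMshift ((-(i:ℤ)-1 : ℤ):ℝ)
      have hr : ((-(i:ℤ)-1 : ℤ):ℝ) + 1 = ((-(i:ℤ) : ℤ):ℝ) := by push_cast; ring
      rw [hr, ih] at h6
      have hr2 : ((-(i:ℤ)-1 : ℤ):ℝ) = (-(i:ℝ)) - 1 := by push_cast; ring
      rw [hr2] at h6 ⊢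
      push_cast at h6 ⊢
      linear_combination -h6
  -- the homotopy
  set H : ℝ → ℝ → ℂ :=
    fun s t => h.symm (Complex.exp ((1 - (s:ℂ)) * L t + (s:ℂ) * (L 0 + A * (t:ℂ)))) with hH
  have hHc : Continuous fun p : ℝ × ℝ => H p.1 p.2 := by
    apply h.symm.continuous.comp
    apply Complex.continuous_exp.comp
    apply Continuous.add
    · exact (continuous_const.sub (Complex.continuous_ofReal.comp continuous_fst)).mul
        (hLc.comp continuous_snd)
    · exact (Complex.continuous_ofReal.comp continuous_fst).mul
        (continuous_const.add (continuous_const.mul (Complex.continuous_ofReal.comp continuous_snd)))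
  have hH0' : ∀ s t, H s t ≠ 0 := fun s t => hsymmne _ (Complex.exp_ne_zero _)
  have hHper : ∀ s t, H s (t + 1) = H s t := by
    intro s t
    show h.symm (Complex.exp ((1 - (s:ℂ)) * L (t+1) + (s:ℂ) * (L 0 + A * ((t+1:ℝ):ℂ)))) =
      h.symm (Complex.exp ((1 - (s:ℂ)) * L t + (s:ℂ) * (L 0 + A * (t:ℂ))))
    congr 1
    rw [hLshift]
    push_cast
    rw [show (1 - (s:ℂ)) * (L t + A) + (s:ℂ) * (L 0 + A * ((t:ℂ)+1)) =
      ((1 - (s:ℂ)) * L t + (s:ℂ) * (L 0 + A * (t:ℂ))) + A from by ring]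
    rw [Complex.exp_add, hexpA, mul_one]
  have hH0eq : H 0 = E := by
    funext t
    show h.symm (Complex.exp ((1 - ((0:ℝ):ℂ)) * L t + ((0:ℝ):ℂ) * (L 0 + A * (t:ℂ)))) = E t
    norm_num
    rw [hL]
    show h.symm (h (E t)) = E t
    exact h.symm_apply_apply (E t)
  have hH1eq : H 1 = fun t => v ((mA:ℝ) * t) := by
    funext t
    show h.symm (Complex.exp ((1 - ((1:ℝ):ℂ)) * L t + ((1:ℝ):ℂ) * (L 0 + A * (t:ℂ)))) =
      h.symm (Complex.exp (L 0 + c₁ * (((mA:ℝ) * t : ℝ):ℂ)))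
    congr 1
    rw [hmA]
    push_cast
    ring
  have hwind0 : WN.wind (H 0) = c₁ := by
    have hlift : ∀ t : ℝ, Complex.exp (c₁ * (t:ℂ)) = H 0 t := by
      intro t; rw [hH0eq]
    rw [WN.wind_spec (L := fun t : ℝ => c₁ * (t:ℂ)) (by rw [hH0eq]; exact hEc) (fun t => by rw [hH0eq]; exact hEne t)
      (continuous_const.mul Complex.continuous_ofReal) hlift]
    push_cast
    ring
  have hwind1 : WN.wind (H 1) = (mA:ℂ) * Bv := by
    have hlift : ∀ t : ℝ, Complex.exp (M ((mA:ℝ) * t)) = H 1 t := by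
      intro t; rw [hH1eq]; exact hM _
    have hcL : Continuous fun t : ℝ => M ((mA:ℝ) * t) :=
      hMc.comp (continuous_const.mul continuous_id)
    rw [WN.wind_spec (by rw [hH1eq]; exact hvc.comp (continuous_const.mul continuous_id))
      (fun t => by rw [hH1eq]; exact hv0 _) hcL hlift]
    norm_num
    rw [hMint mA]
    ring
  have hfin : c₁ = (mA:ℂ) * Bv := by
    rw [← hwind0, WN.wind_homotopy H hHc hH0' hHper, hwind1]
  have hmul : mA * mB = 1 := by
    have hc : ((mA * mB : ℤ):ℂ) * c₁ = 1 * c₁ := by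
      rw [hmB] at hfin
      push_cast
      rw [one_mul]
      linear_combination - hfin
    exact_mod_cast mul_right_cancel₀ hc₁ne hc
  rcases Int.eq_one_or_neg_one_of_mul_eq_one hmul with h1 | h1
  · apply hk1
    rw [Int.modEq_iff_dvd]
    exact ⟨m₀, by rw [h1] at hmAk; linarith⟩
  · apply hkm1
    rw [Int.modEq_iff_dvd]
    exact ⟨m₀, by rw [h1] at hmAk; linarith⟩
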